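/- arXiv:2009.10052 — 2 statements merged into one kernel-verified Lean document; each statement's English description precedes it below -/
import Mathlib

section
/- Assume the Setup (Notation 7.1) with G a finite group, and let p = [G : P] and q = [G : Q]. Then for every subset Z ⊆ E: p·|γ|_{Z,Q} + q·|B|_{Z,Q} ≤ p·|α|_{Z,Q} + q·|β|_{Z,Q}. -/
open Pointwise

open scoped Classical

/-- `sep X Z` is the indicator `|X|*_Z`: it is `1` if `X` separates `Z`
(i.e. `Z` meets both `X` and its complement) and `0` otherwise. -/
noncomputable def sep {E : Type*} (X Z : Set E) : ℕ :=
  if (Z ∩ X).Nonempty ∧ (Z ∩ Xᶜ).Nonempty then 1 else 0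

/-- `|X|_{Z,G'} = Σ_{g ∈ G'} |X|*_{g • Z}` for a subgroup `G'` of a finite group `G`. -/
noncomputable def subNorm {G E : Type*} [Group G] [Fintype G] [MulAction G E]
    (G' : Subgroup G) (X Z : Set E) : ℕ :=
  ∑ g : G', sep X ((g : G) • Z)

/-!
Since `Q` fixes `β` and `B`, the terms `|β|_{Z,Q}` and `|B|_{Z,Q}` are `|Q|` times a single
indicator, while `|α|_{Z,Q}` and `|γ|_{Z,Q}` are sums over the translates `g • α` (`g ∈ Q`), with
`g • γ = g • α ∩ β`. By the edge property these translates are pairwise disjoint or equal, and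
each one occurs `|P|` times. As `p |P| = q |Q| = |G|`, it suffices to show, for a family of sets
`f i` that are pairwise disjoint or equal, each repeated `m` times,
`∑ sep (f i ∩ β) Z + m sep (β ∪ ⋃ f i) Z ≤ ∑ sep (f i) Z + m sep β Z`.
If `Z` lies inside some `f i₀`, the left side is `m sep β Z`. Otherwise `f i ∩ β` separates `Z`
only when `f i` does, and in the one remaining case, where `β ∪ ⋃ f i` separates `Z` but `β` does
not, `Z` misses `β` and is separated by all `m` copies of some `f i₀`.
-/

section Separation

variable {E : Type*} {X Y Z : Set E}

lemma sep_le_one (X Z : Set E) : sep X Z ≤ 1 := by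
  unfold sep; split <;> simp

lemma sep_eq_one (h₁ : (Z ∩ X).Nonempty) (h₂ : (Z ∩ Xᶜ).Nonempty) : sep X Z = 1 :=
  if_pos ⟨h₁, h₂⟩

lemma inter_nonempty_of_sep_eq_one (h : sep X Z = 1) :
    (Z ∩ X).Nonempty ∧ (Z ∩ Xᶜ).Nonempty := by
  by_contra h'
  simp [sep, h'] at h

lemma sep_eq_zero_of_disjoint (h : Disjoint Z X) : sep X Z = 0 :=
  if_neg fun ⟨hX, _⟩ => hX.ne_empty h.inter_eq

lemma sep_eq_zero_of_subset (h : Z ⊆ X) : sep X Z = 0 :=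
  if_neg fun ⟨_, hXc⟩ => hXc.ne_empty (Set.sdiff_eq_empty.mpr h)

lemma sep_inter_of_subset (h : Z ⊆ X) : sep (X ∩ Y) Z = sep Y Z := by
  have hZX : Z ∩ Xᶜ = ∅ := Set.sdiff_eq_empty.mpr h
  rw [sep, sep, ← Set.inter_assoc, Set.inter_eq_left.mpr h, Set.compl_inter,
    Set.inter_union_distrib_left, hZX, Set.empty_union]

lemma sep_inter_le_of_not_subset (h : ¬ Z ⊆ X) : sep (X ∩ Y) Z ≤ sep X Z := by
  by_cases hXY : sep (X ∩ Y) Z = 1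
  · obtain ⟨⟨z, hzZ, hzX, -⟩, -⟩ := inter_nonempty_of_sep_eq_one hXY
    obtain ⟨w, hwZ, hwX⟩ := Set.not_subset.mp h
    exact (sep_eq_one ⟨z, hzZ, hzX⟩ ⟨w, hwZ, hwX⟩).ge.trans' (sep_le_one _ _)
  · have := sep_le_one (X ∩ Y) Z
    omega

lemma sep_smul_smul {G : Type*} [Group G] [MulAction G E] (g : G) (X Z : Set E) :
    sep (g • X) (g • Z) = sep X Z := by
  simp only [sep, ← Set.smul_set_inter, ← Set.smul_set_compl, Set.smul_set_nonempty]

end Separation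

section Family

open Finset

variable {ι E : Type*} [Fintype ι] {f : ι → Set E} {β Z : Set E} {m : ℕ}

lemma sum_sep_inter_of_subset (hf : ∀ i j, (f i ∩ f j).Nonempty → f i = f j)
    (hm : ∀ i, #{j | f j = f i} = m) {i₀ : ι} (hZ : Z ⊆ f i₀) :
    ∑ i, sep (f i ∩ β) Z = m * sep β Z := by
  have hterm : ∀ i, sep (f i ∩ β) Z = if f i = f i₀ then sep β Z else 0 := by
    intro i
    split_ifs with hi
    · exact sep_inter_of_subset (hi ▸ hZ)
    · refine sep_eq_zero_of_disjoint (Set.disjoint_left.mpr fun z hzZ hz => hi ?_)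
      exact hf i i₀ ⟨z, hz.1, hZ hzZ⟩
  rw [Fintype.sum_congr _ _ hterm, sum_ite, sum_const_zero, sum_const, hm, smul_eq_mul, add_zero]

lemma le_sum_sep_of_sep_eq_one (hm : ∀ i, #{j | f j = f i} = m) {i₀ : ι}
    (h : sep (f i₀) Z = 1) : m ≤ ∑ i, sep (f i) Z :=
  calc m = ∑ i ∈ {j | f j = f i₀}, sep (f i) Z := by
        rw [← hm i₀, card_eq_sum_ones]
        exact sum_congr rfl fun j hj => by rw [(mem_filter.mp hj).2, h]
    _ ≤ ∑ i, sep (f i) Z := sum_le_sum_of_subset (subset_univ _)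

lemma sum_sep_inter_add_le (hf : ∀ i j, (f i ∩ f j).Nonempty → f i = f j)
    (hm : ∀ i, #{j | f j = f i} = m) :
    ∑ i, sep (f i ∩ β) Z + m * sep (β ∪ ⋃ i, f i) Z ≤ ∑ i, sep (f i) Z + m * sep β Z := by
  by_cases hsub : ∃ i₀, Z ⊆ f i₀
  · obtain ⟨i₀, hZ⟩ := hsub
    have hB : sep (β ∪ ⋃ i, f i) Z = 0 :=
      sep_eq_zero_of_subset (hZ.trans ((Set.subset_iUnion f i₀).trans Set.subset_union_right))
    rw [sum_sep_inter_of_subset hf hm hZ, hB]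
    omega
  push Not at hsub
  have hle : ∑ i, sep (f i ∩ β) Z ≤ ∑ i, sep (f i) Z :=
    sum_le_sum fun i _ => sep_inter_le_of_not_subset (hsub i)
  by_cases hBβ : sep (β ∪ ⋃ i, f i) Z ≤ sep β Z
  · gcongr
  have hB : sep (β ∪ ⋃ i, f i) Z = 1 := by have := sep_le_one (β ∪ ⋃ i, f i) Z; omega
  have hβ : sep β Z = 0 := by omega
  obtain ⟨⟨z, hzZ, hzB⟩, ⟨w, hwZ, hwB⟩⟩ := inter_nonempty_of_sep_eq_one hB
  have hZβ : Disjoint Z β := by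
    refine Set.disjoint_left.mpr fun y hyZ hyβ => ?_
    have := sep_eq_one ⟨y, hyZ, hyβ⟩ ⟨w, hwZ, fun hwβ => hwB (Or.inl hwβ)⟩
    omega
  obtain ⟨i₀, hzi₀⟩ := Set.mem_iUnion.mp (hzB.resolve_left (Set.disjoint_left.mp hZβ hzZ))
  have hsep : sep (f i₀) Z = 1 :=
    sep_eq_one ⟨z, hzZ, hzi₀⟩ ⟨w, hwZ, fun hw => hwB (Or.inr (Set.mem_iUnion_of_mem i₀ hw))⟩
  have hinter : ∑ i, sep (f i ∩ β) Z = 0 :=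
    sum_eq_zero fun i _ => sep_eq_zero_of_disjoint (hZβ.mono_right Set.inter_subset_right)
  have := le_sum_sep_of_sep_eq_one hm hsep
  rw [hinter, hB, hβ]
  omega

end Family

section Translates

open Finset MulAction

variable {G E : Type*} [Group G] [MulAction G E]

lemma smul_eq_smul_of_inter_nonempty {α : Set E}
    (hα : ∀ x : G, (α ∩ x • α).Nonempty → x • α = α) {g h : G}
    (hgh : (g • α ∩ h • α).Nonempty) : g • α = h • α := by
  have hne : (α ∩ (g⁻¹ * h) • α).Nonempty := by
    simpa only [Set.smul_set_inter, inv_smul_smul, mul_smul] using hgh.smul_set (a := g⁻¹)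
  calc g • α = g • (g⁻¹ * h) • α := by rw [hα _ hne]
    _ = h • α := by rw [smul_smul, mul_inv_cancel_left]

lemma card_filter_smul_eq_smul (Q : Subgroup G) [Fintype Q] (x : E)
    (hQ : stabilizer G x ≤ Q) (g : Q) :
    #{h : Q | (h : G) • x = (g : G) • x} = Nat.card (stabilizer G x) := by
  rw [← Fintype.card_subtype, ← Nat.card_eq_fintype_card]
  refine Nat.card_congr
    { toFun := fun h => ⟨(g : G)⁻¹ * h, by rw [mem_stabilizer_iff, mul_smul, h.2, inv_smul_smul]⟩
      invFun := fun s => ⟨⟨g * s, mul_mem g.2 (hQ s.2)⟩, by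
        simp only [mul_smul, mem_stabilizer_iff.mp s.2]⟩
      left_inv := fun h => by ext; simp
      right_inv := fun s => by ext; simp }

lemma le_stabilizer_iUnion_smul (Q : Subgroup G) (s : Set E) :
    Q ≤ stabilizer G (⋃ q ∈ Q, q • s) := by
  intro g hg
  rw [mem_stabilizer_iff]
  simp only [← SetLike.mem_coe, Set.iUnion_smul_set]
  rw [← smul_assoc, smul_coe_set hg]

lemma le_stabilizer_union_iUnion_smul {Q : Subgroup G} {β : Set E} (hQ : Q ≤ stabilizer G β)
    (α : Set E) : Q ≤ stabilizer G (β ∪ ⋃ q ∈ Q, q • α) := fun g hg => by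
  rw [mem_stabilizer_iff, Set.smul_set_union, mem_stabilizer_iff.mp (hQ hg),
    mem_stabilizer_iff.mp (le_stabilizer_iUnion_smul Q α hg)]

variable [Fintype G]

lemma subNorm_eq_sum_smul (Q : Subgroup G) (X Z : Set E) :
    subNorm Q X Z = ∑ g : Q, sep ((g : G) • X) Z := by
  refine Fintype.sum_equiv (Equiv.inv Q) _ _ fun g => ?_
  rw [← sep_smul_smul (g : G)⁻¹, Equiv.inv_apply, Subgroup.coe_inv, inv_smul_smul]

lemma subNorm_eq_card_mul {Q : Subgroup G} {X : Set E} (hX : Q ≤ stabilizer G X) (Z : Set E) :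
    subNorm Q X Z = Nat.card Q * sep X Z := by
  simp only [subNorm_eq_sum_smul, fun g : Q => mem_stabilizer_iff.mp (hX g.2), sum_const,
    card_univ, smul_eq_mul, Nat.card_eq_fintype_card]

end Translates

theorem stmt_6_general {G E : Type*} [Group G] [Fintype G] [MulAction G E]
    (α β : Set E)
    (hedgeα : ∀ x : G, (α ∩ x • α).Nonempty → x • α = α)
    (P Q : Subgroup G)
    (hP : P = MulAction.stabilizer G α)
    (hQ : Q = MulAction.stabilizer G β)
    (hPQ : P ≤ Q)
    (γ B : Set E)
    (hγ : γ = α ∩ β) (hB : B = β ∪ ⋃ q ∈ Q, q • α)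
    (p q : ℕ) (hp : p = P.index) (hq : q = Q.index) :
    ∀ Z : Set E,
      p * subNorm Q γ Z + q * subNorm Q B Z ≤
        p * subNorm Q α Z + q * subNorm Q β Z := by
  intro Z
  subst hγ hB hp hq
  have hγ (g : Q) : (g : G) • (α ∩ β) = (g : G) • α ∩ β := by
    rw [Set.smul_set_inter, show (g : G) • β = β from hQ.le g.2]
  have key := sum_sep_inter_add_le (f := fun g : Q => (g : G) • α) (β := β) (Z := Z)
    (fun _ _ => smul_eq_smul_of_inter_nonempty hedgeα) (card_filter_smul_eq_smul Q α (hP ▸ hPQ))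
  rw [Set.iUnion_subtype, ← hP] at key
  have hcard : P.index * Nat.card P = Q.index * Nat.card Q := by
    rw [Subgroup.index_mul_card, Subgroup.index_mul_card]
  rw [subNorm_eq_sum_smul Q (α ∩ β), subNorm_eq_sum_smul Q α, subNorm_eq_card_mul hQ.le,
    subNorm_eq_card_mul (le_stabilizer_union_iUnion_smul hQ.le α)]
  simp only [hγ]
  nlinarith [Nat.mul_le_mul_left P.index key]

/-- Lemma 7.3: in the Setup (Notation 7.1) with `G` finite, `p = [G : P]`,
`q = [G : Q]`, `γ = α ∩ β` and `B = β ∪ Q • α`, for every `Z ⊆ E`: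
`p|γ|_{Z,Q} + q|B|_{Z,Q} ≤ p|α|_{Z,Q} + q|β|_{Z,Q}`. -/
theorem stmt_6 {G E : Type*} [Group G] [Fintype G] [MulAction G E]
    (α β : Set E) (hα : α.Nonempty) (hβ : β.Nonempty)
    (hedgeα : ∀ x : G, (α ∩ x • α).Nonempty → x • α = α)
    (hedgeβ : ∀ x : G, (β ∩ x • β).Nonempty → x • β = β)
    (P Q : Subgroup G)
    (hP : P = MulAction.stabilizer G α)
    (hQ : Q = MulAction.stabilizer G β)
    (hαβ : (α ∩ β).Nonempty)
    (hPQ : P ≤ Q)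
    (hsimple : ∀ g : G, (α ∩ g • β).Nonempty → g ∈ Q)
    (γ A B : Set E)
    (hγ : γ = α ∩ β) (hA : A = α \ γ) (hB : B = β ∪ ⋃ q ∈ Q, q • α)
    (p q : ℕ) (hp : p = P.index) (hq : q = Q.index) :
    ∀ Z : Set E,
      p * subNorm Q γ Z + q * subNorm Q B Z ≤
        p * subNorm Q α Z + q * subNorm Q β Z :=
  stmt_6_general α β hedgeα P Q hP hQ hPQ γ B hγ hB p q hp hq
end

section
/- Assume the Setup (Section 7.2) with G a finite group, let p = [G : P] and q = [G : Q], and let (Z_j)_{j ∈ J} be a finite family of subsets of E. Define ‖X‖ = Σ_{j ∈ J} Σ_{g ∈ G} |X|*_{g • Z_j} for X ⊆ E. Then p·‖α ∖ γ‖ + q·‖β ∖ γ'‖ ≤ p·‖α‖ + q·‖β‖. -/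
open Pointwise

open scoped Classical

/-!
Fix a boundary `W = Z j` and count the translates `g` for which `g • X` separates `W`.
If `g • (α \ γ)` separates `W` but `g • α` does not, then `W ⊆ g • α` and `W` meets `g • γ`.
By the edge property all such `g` lie in a single left coset of `P`, so there are at most `|P|`
of them; and `W` meeting `g • γ` yields a coset `m Q` of translates of `β` that separate `W`
while `m • (β \ γ')` misses `W`. Since `p |P| = q |Q| = |G|`, the `p`-weighted excess of
`‖α \ γ‖` over `‖α‖` is thus bounded by the `q`-weighted drop from `‖β‖` to `‖β \ γ'‖`, and
symmetrically.
-/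

open Finset MulAction

section

variable {G E : Type*} [Group G] [MulAction G E]

def Separates (X Z : Set E) : Prop :=
  (Z ∩ X).Nonempty ∧ (Z ∩ Xᶜ).Nonempty

lemma separates_smul_iff (g : G) (X Z : Set E) :
    Separates (g • X) (g • Z) ↔ Separates X Z := by
  simp only [Separates, ← Set.smul_set_inter, ← Set.smul_set_compl, Set.smul_set_nonempty]

lemma Separates.subset_of_not_separates {A α W : Set E} (hAα : A ⊆ α) (hA : Separates A W)
    (hα : ¬Separates α W) : W ⊆ α ∧ (W ∩ (α \ A)).Nonempty := by
  obtain ⟨⟨a, haW, haA⟩, ⟨b, hbW, hbA⟩⟩ := hA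
  have hWα : W ⊆ α := fun w hw => by
    by_contra hwα
    exact hα ⟨⟨a, haW, hAα haA⟩, ⟨w, hw, hwα⟩⟩
  exact ⟨hWα, b, hbW, hWα hbW, hbA⟩

/-- The paper's `γ` is `stabOverlap α β x`, and its `γ'` is `stabOverlap β α x⁻¹`. -/
def stabOverlap (α β : Set E) (x : G) : Set E :=
  ⋃ h ∈ stabilizer G α, h • (α ∩ x • β)

variable {α β : Set E} {x h : G}

lemma stabOverlap_subset : stabOverlap α β x ⊆ α :=
  Set.iUnion₂_subset fun _ hh =>
    (Set.smul_set_mono Set.inter_subset_left).trans (mem_stabilizer_iff.mp hh).subset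

lemma smul_inter_subset_stabOverlap (hh : h ∈ stabilizer G α) :
    h • (α ∩ x • β) ⊆ stabOverlap α β x :=
  Set.subset_biUnion_of_mem (u := fun h : G => h • (α ∩ x • β)) hh

lemma disjoint_sdiff_stabOverlap (hh : h ∈ stabilizer G α) :
    Disjoint (α \ stabOverlap α β x) ((h * x) • β) := by
  rw [Set.disjoint_left]
  rintro a ⟨haα, haγ⟩ haβ
  refine haγ (smul_inter_subset_stabOverlap hh ?_)
  rw [Set.smul_set_inter, mem_stabilizer_iff.mp hh, smul_smul]
  exact ⟨haα, haβ⟩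

lemma disjoint_smul_sdiff_stabOverlap {k : G} (hh : h ∈ stabilizer G α)
    (hk : k ∈ stabilizer G β) :
    Disjoint α ((h * x * k) • (β \ stabOverlap β α x⁻¹)) := by
  have hα : (h * x * k)⁻¹ • α = (k⁻¹ * x⁻¹) • α := by
    rw [show (h * x * k)⁻¹ = k⁻¹ * x⁻¹ * h⁻¹ by group, ← smul_smul,
      mem_stabilizer_iff.mp (inv_mem hh)]
  rw [Set.disjoint_smul_set_right, hα]
  exact (disjoint_sdiff_stabOverlap (inv_mem hk)).symm

end

lemma Finset.card_add_card_le_card_add_card_sdiff {α : Type*} [DecidableEq α] {s t u : Finset α}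
    (hut : u ⊆ t) (hsu : Disjoint s u) : #s + #u ≤ #t + #(s \ t) := by
  have hu : #(s ∩ t) + #u ≤ #t := by
    rw [← card_union_of_disjoint (disjoint_of_subset_left inter_subset_left hsu)]
    exact card_le_card (union_subset inter_subset_right hut)
  rw [← card_inter_add_card_sdiff s t]
  omega

section

variable {G E : Type*} [Group G] [Fintype G] [MulAction G E]

variable (G) in
noncomputable def separators (W X : Set E) : Finset G := {g | Separates (g • X) W}

lemma sum_sep_smul (X W : Set E) : ∑ g : G, sep X (g • W) = #(separators G W X) := by
  rw [separators, card_filter]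
  refine Fintype.sum_equiv (Equiv.inv G) _ _ fun g => ?_
  rw [Equiv.inv_apply, ← separates_smul_iff g, smul_inv_smul, sep, Separates]
  congr -- the two sides differ only in their `Decidable` instances

variable {α β W : Set E} {x g : G}

lemma card_filter_subset_smul_le (hα : ∀ y : G, (α ∩ y • α).Nonempty → y • α = α)
    (hW : W.Nonempty) : #{g : G | W ⊆ g • α} ≤ Nat.card (stabilizer G α) := by
  rcases eq_empty_or_nonempty ({g : G | W ⊆ g • α} : Finset G) with h | ⟨g₀, hg₀⟩
  · simp [h]
  obtain ⟨w, hw⟩ := hW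
  have hg₀ : W ⊆ g₀ • α := (mem_filter.mp hg₀).2
  calc #{g : G | W ⊆ g • α} ≤ #{h : G | h ∈ stabilizer G α} := by
        refine card_le_card_of_injOn (g₀⁻¹ * ·) (fun g hg => ?_) (mul_right_injective _).injOn
        have hg : W ⊆ g • α := (mem_filter.mp hg).2
        simp only [coe_filter, mem_univ, true_and, Set.mem_ofPred_eq]
        refine hα _ ⟨g₀⁻¹ • w, ?_, ?_⟩
        · exact Set.mem_smul_set_iff_inv_smul_mem.mp (hg₀ hw)
        · rw [← smul_smul, Set.smul_mem_smul_set_iff]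
          exact hg hw
    _ = Nat.card (stabilizer G α) := by
        rw [Nat.card_eq_fintype_card, Fintype.card_subtype]

lemma subset_smul_and_exists_of_mem_separators_sdiff
    (hg : g ∈ separators G W (α \ stabOverlap α β x) \ separators G W α) :
    W ⊆ g • α ∧ (W ∩ g • (α \ stabOverlap α β x)).Nonempty ∧
      ∃ h ∈ stabilizer G α, (W ∩ (g * h) • (α ∩ x • β)).Nonempty := by
  simp only [separators, mem_sdiff, mem_filter, mem_univ, true_and] at hg
  obtain ⟨hWα, w, hwW, hwγ⟩ := hg.1.subset_of_not_separates
    (Set.smul_set_mono Set.sdiff_subset) hg.2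
  rw [← Set.smul_set_sdiff, Set.sdiff_sdiff_cancel_left stabOverlap_subset] at hwγ
  obtain ⟨a, ha, rfl⟩ := hwγ
  obtain ⟨h, hh, ha⟩ := Set.mem_iUnion₂.mp ha
  exact ⟨hWα, hg.1.1, h, hh, g • a, hwW, by rw [mul_smul]; exact Set.smul_mem_smul_set ha⟩

lemma card_stabilizer_le_card_filter
    (hg : g ∈ separators G W (α \ stabOverlap α β x) \ separators G W α) :
    Nat.card (stabilizer G β) ≤
      #{m ∈ separators G W β | Disjoint W (m • (β \ stabOverlap β α x⁻¹))} := by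
  obtain ⟨hWα, ⟨w, hwW, hwA⟩, h, hh, hWh⟩ :=
    subset_smul_and_exists_of_mem_separators_sdiff hg
  calc Nat.card (stabilizer G β) = #{k : G | k ∈ stabilizer G β} := by
        rw [Nat.card_eq_fintype_card, Fintype.card_subtype]
    _ ≤ _ := by
        refine card_le_card_of_injOn (g * h * x * ·) (fun k hk => ?_) (mul_right_injective _).injOn
        simp only [coe_filter, mem_univ, true_and, Set.mem_ofPred_eq] at hk
        have hβ : (g * h * x * k) • β = (g * h) • x • β := by
          rw [mul_smul, mem_stabilizer_iff.mp hk, mul_smul]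
        have hwβ : w ∉ (g * h * x * k) • β := by
          rw [hβ, mul_smul g h, smul_smul h x]
          exact Set.disjoint_left.mp ((Set.disjoint_smul_set (a := g)).mpr
            (disjoint_sdiff_stabOverlap hh)) hwA
        simp only [separators, coe_filter, mem_filter, mem_univ, true_and, Set.mem_ofPred_eq]
        refine ⟨⟨?_, w, hwW, hwβ⟩, ?_⟩
        · rw [hβ]
          exact hWh.mono (Set.inter_subset_inter_right _
            (Set.smul_set_mono Set.inter_subset_right))
        · refine Set.disjoint_of_subset_left hWα ?_
          rw [show g * h * x * k = g * (h * x * k) by group, mul_smul, Set.disjoint_smul_set]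
          exact disjoint_smul_sdiff_stabOverlap hh hk

lemma index_mul_card_sdiff_le (hα : ∀ y : G, (α ∩ y • α).Nonempty → y • α = α) (W : Set E) :
    (stabilizer G α).index * #(separators G W (α \ stabOverlap α β x) \ separators G W α) ≤
      (stabilizer G β).index *
        #{m ∈ separators G W β | Disjoint W (m • (β \ stabOverlap β α x⁻¹))} := by
  rcases eq_empty_or_nonempty (separators G W (α \ stabOverlap α β x) \ separators G W α)
    with hempty | ⟨g, hg⟩
  · simp [hempty]
  obtain ⟨-, ⟨w, hwW, -⟩, -⟩ := subset_smul_and_exists_of_mem_separators_sdiff hg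
  have hbad : separators G W (α \ stabOverlap α β x) \ separators G W α ⊆
      ({g : G | W ⊆ g • α} : Finset G) := fun g' hg' => by
    simpa using (subset_smul_and_exists_of_mem_separators_sdiff hg').1
  calc (stabilizer G α).index * #(separators G W (α \ stabOverlap α β x) \ separators G W α)
      ≤ (stabilizer G α).index * Nat.card (stabilizer G α) := by
        gcongr
        exact (card_le_card hbad).trans (card_filter_subset_smul_le hα ⟨w, hwW⟩)
    _ = (stabilizer G β).index * Nat.card (stabilizer G β) := by
        rw [Subgroup.index_mul_card, Subgroup.index_mul_card]
    _ ≤ _ := by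
        gcongr
        exact card_stabilizer_le_card_filter hg

lemma index_mul_card_separators_add_le (hα : ∀ y : G, (α ∩ y • α).Nonempty → y • α = α)
    (hβ : ∀ y : G, (β ∩ y • β).Nonempty → y • β = β) (W : Set E) :
    (stabilizer G α).index * #(separators G W (α \ stabOverlap α β x)) +
        (stabilizer G β).index * #(separators G W (β \ stabOverlap β α x⁻¹)) ≤
      (stabilizer G α).index * #(separators G W α) +
        (stabilizer G β).index * #(separators G W β) := by
  have key := index_mul_card_sdiff_le (β := β) (x := x) hα W
  have key' := index_mul_card_sdiff_le (β := α) (x := x⁻¹) hβ W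
  rw [inv_inv] at key'
  have split (δ ε : Set E) := card_add_card_le_card_add_card_sdiff
    (s := separators G W ε) (filter_subset (fun g => Disjoint W (g • ε)) (separators G W δ))
    (disjoint_left.mpr fun g hε hδ => Set.not_disjoint_iff_nonempty_inter.mpr
      (mem_filter.mp hε).2.1 (mem_filter.mp hδ).2)
  have hα' := Nat.mul_le_mul_left (stabilizer G α).index (split α (α \ stabOverlap α β x))
  have hβ' := Nat.mul_le_mul_left (stabilizer G β).index (split β (β \ stabOverlap β α x⁻¹))
  rw [mul_add, mul_add] at hα' hβ'
  linarith

end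

/-- Lemma 7.10 (combinatorial content, analogue of Krstić–Vogtmann Lemma 7.2):
in the Setup (Section 7.2) with `G` finite, `p = [G : P]`, `q = [G : Q]`, and
`‖X‖ = Σ_j Σ_{g ∈ G} |X|*_{g • Z_j}` for a finite family `(Z_j)`, we have
`p‖α ∖ γ‖ + q‖β ∖ γ'‖ ≤ p‖α‖ + q‖β‖`. -/
theorem stmt_12 {G E : Type*} [Group G] [Fintype G] [MulAction G E]
    (α β : Set E)
    (hedgeα : ∀ y : G, (α ∩ y • α).Nonempty → y • α = α)
    (hedgeβ : ∀ y : G, (β ∩ y • β).Nonempty → y • β = β)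
    (P Q : Subgroup G)
    (hP : P = MulAction.stabilizer G α)
    (hQ : Q = MulAction.stabilizer G β)
    (x : G)
    (γ γ' : Set E)
    (hγ : γ = ⋃ g ∈ P, g • (α ∩ x • β))
    (hγ' : γ' = ⋃ g ∈ Q, g • (β ∩ x⁻¹ • α))
    (p q : ℕ) (hp : p = P.index) (hq : q = Q.index)
    {J : Type*} [Fintype J] (Z : J → Set E)
    (norm : Set E → ℕ)
    (hnorm : ∀ X : Set E, norm X = ∑ j : J, ∑ g : G, sep X (g • Z j)) :
    p * norm (α \ γ) + q * norm (β \ γ') ≤ p * norm α + q * norm β := by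
  subst hP hQ hp hq
  obtain rfl : γ = stabOverlap α β x := hγ
  obtain rfl : γ' = stabOverlap β α x⁻¹ := hγ'
  simp only [hnorm, sum_sep_smul, mul_sum, ← sum_add_distrib]
  exact sum_le_sum fun j _ => index_mul_card_separators_add_le hedgeα hedgeβ (Z j)
end
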